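/- arXiv:2311.01948 — 5 statements merged into one kernel-verified Lean document; each statement's English description precedes it below -/
import Mathlib

section
/- Let n >= 1, let sigma1 and sigma2 be positive finite Borel measures on T^n, let w be in D^n, let q be in L^2(sigma2), and suppose the Cauchy transform of the complex measure nu := C(.,w)*sigma1 - q*sigma2 vanishes identically on D^n. If N is a Borel subset of T^n that is a null set for A(D^n)-perp, then the restriction sigma1|_N is absolutely continuous with respect to sigma2 and its Radon-Nikodym derivative d(sigma1|_N)/d(sigma2) belongs to L^2(sigma2); in fact sigma1|_N = (q / C(.,w)) * sigma2|_N. -/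
open MeasureTheory Complex Set Filter Topology MvPolynomial

noncomputable section

/-- The torus `T^n` as a subset of `ℂ^n`. -/
def torus (n : ℕ) : Set (Fin n → ℂ) := {z | ∀ i, ‖z i‖ = 1}

/-- The open unit polydisc `D^n`. -/
def polydisc (n : ℕ) : Set (Fin n → ℂ) := {z | ∀ i, ‖z i‖ < 1}

/-- The product Cauchy kernel `C(z,w) = ∏ 1/(1 - z_j conj(w_j))`. -/
def cauchyKer {n : ℕ} (z w : Fin n → ℂ) : ℂ :=
  ∏ i, (1 - z i * (starRingEnd ℂ) (w i))⁻¹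

/-- The product Poisson kernel `∏ (1-|z_j|^2)/|ζ_j - z_j|^2`. -/
def poissonKer {n : ℕ} (z ζ : Fin n → ℂ) : ℝ :=
  ∏ i, (1 - ‖z i‖ ^ 2) / ‖ζ i - z i‖ ^ 2

/-- `σ` is the Clark-Aleksandrov measure of `b` at parameter `α`: a finite positive
Borel measure carried by the torus whose Poisson integral is `(1-|b|^2)/|α-b|^2`. -/
def IsClarkMeasure (n : ℕ) (b : (Fin n → ℂ) → ℂ) (α : ℂ)
    (σ : Measure (Fin n → ℂ)) : Prop :=
  IsFiniteMeasure σ ∧ σ (torus n)ᶜ = 0 ∧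
    ∀ z ∈ polydisc n, ∫ ζ, poissonKer z ζ ∂σ =
      (1 - ‖b z‖ ^ 2) / ‖α - b z‖ ^ 2

/-- Normalized Haar (Lebesgue) measure on `T^n`, as a measure on `ℂ^n`. -/
def haarTorus (n : ℕ) : Measure (Fin n → ℂ) :=
  (ENNReal.ofReal (2 * Real.pi))⁻¹ ^ n •
    ((volume : Measure (Fin n → ℝ)).restrict
        (Set.univ.pi fun _ => Set.Ioc (0 : ℝ) (2 * Real.pi))).map
      (fun (t : Fin n → ℝ) i => Complex.exp (t i * Complex.I))

/-- A Borel set `N ⊆ T^n` is a null set for `A(D^n)^⊥`: every complex Borel measure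
on `T^n` (written as `f dρ` with `ρ` a finite positive measure carried by the torus
and `f` integrable) all of whose moments `∫ ζ^k f dρ` vanish gives `N` total
variation zero. -/
def IsNullSetForAnnihilators (n : ℕ) (N : Set (Fin n → ℂ)) : Prop :=
  ∀ (ρ : Measure (Fin n → ℂ)) (f : (Fin n → ℂ) → ℂ),
    IsFiniteMeasure ρ → ρ (torus n)ᶜ = 0 → Integrable f ρ →
    (∀ k : Fin n → ℕ, ∫ ζ, (∏ i, ζ i ^ k i) * f ζ ∂ρ = 0) →
    ∫⁻ ζ in N, ‖f ζ‖₊ ∂ρ = 0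

/-!
Put `ρ = σ₁ + σ₂` and `gᵢ = dσᵢ/dρ`. The measure `ν` has density `h = g₁ C(·,w) - g₂ q` with
respect to `ρ`, and the vanishing of its Cauchy transform says that `conj h · ρ` annihilates the
polynomials, so `h = 0` `ρ`-a.e. on the null set `N`. Since `C(·,w)` has no zeros on `Tⁿ`, this
reads `g₁ = (q / C(·,w)) g₂` on `N`, i.e. `σ₁|_N = (q / C(·,w)) σ₂|_N`; and `q / C(·,w)` lies in
`L²(σ₂)` because `1 / C(·,w)` is bounded on `Tⁿ`.
-/

section RnDerivRelation

variable {X : Type*} [MeasurableSpace X] {μ ν ρ : Measure X}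
  [SigmaFinite μ] [SigmaFinite ν] [SigmaFinite ρ]

section Difference

variable {E : Type*} [NormedAddCommGroup E] [NormedSpace ℝ E] {a b : X → E}

lemma integrable_rnDeriv_smul_sub_rnDeriv_smul (hμ : μ ≪ ρ) (hν : ν ≪ ρ)
    (ha : Integrable a μ) (hb : Integrable b ν) :
    Integrable (fun x => (μ.rnDeriv ρ x).toReal • a x - (ν.rnDeriv ρ x).toReal • b x) ρ :=
  ((integrable_rnDeriv_smul_iff hμ).2 ha).sub ((integrable_rnDeriv_smul_iff hν).2 hb)

lemma integral_rnDeriv_smul_sub_rnDeriv_smul (hμ : μ ≪ ρ) (hν : ν ≪ ρ)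
    (ha : Integrable a μ) (hb : Integrable b ν) :
    ∫ x, ((μ.rnDeriv ρ x).toReal • a x - (ν.rnDeriv ρ x).toReal • b x) ∂ρ =
      ∫ x, a x ∂μ - ∫ x, b x ∂ν := by
  rw [integral_sub ((integrable_rnDeriv_smul_iff hμ).2 ha) ((integrable_rnDeriv_smul_iff hν).2 hb),
    integral_rnDeriv_smul hμ, integral_rnDeriv_smul hν]

end Difference

variable {u : X → ℂ} {N : Set X}

lemma restrict_eq_withDensity_of_ae_rnDeriv_eq_mul (hμ : μ ≪ ρ) (hν : ν ≪ ρ)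
    (hu : AEMeasurable u ρ) (hN : MeasurableSet N)
    (h : ∀ᵐ x ∂ρ, x ∈ N → ((μ.rnDeriv ρ x).toReal : ℂ) = u x * (ν.rnDeriv ρ x).toReal) :
    μ.restrict N = ν.withDensity fun x => ‖N.indicator u x‖ₑ := by
  have hφ : AEMeasurable (fun x => ‖u x‖ₑ) ρ := hu.enorm
  have hENN : ∀ᵐ x ∂ρ, x ∈ N → μ.rnDeriv ρ x = ν.rnDeriv ρ x * ‖u x‖ₑ := by
    filter_upwards [h, μ.rnDeriv_lt_top ρ, ν.rnDeriv_lt_top ρ] with x hx hμx hνx hxN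
    have hnorm : (μ.rnDeriv ρ x).toReal = ‖u x‖ * (ν.rnDeriv ρ x).toReal := by
      simpa [Complex.norm_real] using congrArg norm (hx hxN)
    rw [← ENNReal.ofReal_toReal hμx.ne, hnorm, ENNReal.ofReal_mul (norm_nonneg _), ofReal_norm,
      ENNReal.ofReal_toReal hνx.ne, mul_comm]
  ext s hs
  calc μ.restrict N s = ∫⁻ x in s ∩ N, μ.rnDeriv ρ x ∂ρ := by
        rw [Measure.restrict_apply hs, Measure.setLIntegral_rnDeriv hμ]
    _ = ∫⁻ x in s ∩ N, ν.rnDeriv ρ x * ‖u x‖ₑ ∂ρ := by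
        refine setLIntegral_congr_fun_ae (hs.inter hN) ?_
        filter_upwards [hENN] with x hx hxsN using hx hxsN.2
    _ = ∫⁻ x in s ∩ N, ‖u x‖ₑ ∂ν := setLIntegral_rnDeriv_mul hν hφ (hs.inter hN)
    _ = ν.withDensity (fun x => ‖N.indicator u x‖ₑ) s := by
        simp only [withDensity_apply _ hs, enorm_indicator_eq_indicator_enorm,
          setLIntegral_indicator hN, Set.inter_comm N s]

lemma setIntegral_eq_of_ae_rnDeriv_eq_mul (hμ : μ ≪ ρ) (hν : ν ≪ ρ) (hN : MeasurableSet N)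
    (h : ∀ᵐ x ∂ρ, x ∈ N → ((μ.rnDeriv ρ x).toReal : ℂ) = u x * (ν.rnDeriv ρ x).toReal)
    {A : Set X} (hA : MeasurableSet A) :
    ((μ (A ∩ N)).toReal : ℂ) = ∫ x in A ∩ N, u x ∂ν := by
  calc ((μ (A ∩ N)).toReal : ℂ) = ∫ x in A ∩ N, ((μ.rnDeriv ρ x).toReal : ℂ) ∂ρ := by
        rw [← measureReal_def, ← Measure.setIntegral_toReal_rnDeriv hμ]
        exact integral_ofReal.symm
    _ = ∫ x in A ∩ N, (ν.rnDeriv ρ x).toReal • u x ∂ρ := by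
        refine setIntegral_congr_ae (hA.inter hN) ?_
        filter_upwards [h] with x hx hxAN
        rw [hx hxAN.2, Complex.real_smul, mul_comm]
    _ = ∫ x in A ∩ N, u x ∂ν := setIntegral_rnDeriv_smul hν (hA.inter hN)

end RnDerivRelation

lemma lintegral_rnDeriv_withDensity_enorm_sq_lt_top {X E : Type*} [MeasurableSpace X]
    [NormedAddCommGroup E] {ν : Measure X} [SigmaFinite ν] {v : X → E} (hv : MemLp v 2 ν) :
    ∫⁻ x, (ν.withDensity fun x => ‖v x‖ₑ).rnDeriv ν x ^ 2 ∂ν < ⊤ := by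
  rw [lintegral_congr_ae ((Measure.rnDeriv_withDensity₀ ν hv.1.enorm).mono fun x hx => by
    rw [hx])]
  simpa only [ENNReal.toReal_ofNat, ENNReal.rpow_two] using
    lintegral_rpow_enorm_lt_top_of_eLpNorm_lt_top two_ne_zero ENNReal.ofNat_ne_top hv.2

section CauchyKernel

variable {n : ℕ} {ζ w : Fin n → ℂ}

lemma one_sub_norm_le_norm_one_sub_mul_conj {a b : ℂ} (ha : ‖a‖ = 1) :
    1 - ‖b‖ ≤ ‖1 - a * starRingEnd ℂ b‖ := by
  simpa [ha] using norm_sub_norm_le (1 : ℂ) (a * starRingEnd ℂ b)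

lemma norm_one_sub_mul_conj_le_two {a b : ℂ} (ha : ‖a‖ = 1) (hb : ‖b‖ ≤ 1) :
    ‖1 - a * starRingEnd ℂ b‖ ≤ 2 := by
  calc ‖1 - a * starRingEnd ℂ b‖ ≤ 1 + ‖b‖ :=
        (norm_sub_le (1 : ℂ) (a * starRingEnd ℂ b)).trans_eq (by simp [ha])
    _ ≤ 2 := by linarith

lemma measurable_cauchyKer (w : Fin n → ℂ) : Measurable fun ζ : Fin n → ℂ => cauchyKer ζ w :=
  Finset.measurable_prod _ fun i _ => (((measurable_pi_apply i).mul_const _).const_sub 1).inv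

lemma norm_cauchyKer_le (hζ : ζ ∈ torus n) (hw : w ∈ polydisc n) :
    ‖cauchyKer ζ w‖ ≤ ∏ i, (1 - ‖w i‖)⁻¹ := by
  rw [cauchyKer, norm_prod]
  refine Finset.prod_le_prod (fun i _ => norm_nonneg _) fun i _ => ?_
  rw [norm_inv]
  exact inv_anti₀ (sub_pos.2 (hw i)) (one_sub_norm_le_norm_one_sub_mul_conj (hζ i))

lemma norm_inv_cauchyKer_le (hζ : ζ ∈ torus n) (hw : w ∈ polydisc n) :
    ‖(cauchyKer ζ w)⁻¹‖ ≤ 2 ^ n := by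
  rw [cauchyKer, Finset.prod_inv_distrib, inv_inv, norm_prod]
  exact (Finset.prod_le_prod (fun i _ => norm_nonneg _)
    fun i _ => norm_one_sub_mul_conj_le_two (hζ i) (hw i).le).trans_eq (by simp)

lemma cauchyKer_ne_zero (hζ : ζ ∈ torus n) (hw : w ∈ polydisc n) : cauchyKer ζ w ≠ 0 := by
  refine Finset.prod_ne_zero_iff.2 fun i _ => inv_ne_zero (norm_pos_iff.1 ?_)
  linarith [one_sub_norm_le_norm_one_sub_mul_conj (b := w i) (hζ i), hw i]

end CauchyKernel

section TorusMeasures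

variable {n : ℕ} {σ : Measure (Fin n → ℂ)}

lemma integrable_conj_monomial_mul (hσ : σ (torus n)ᶜ = 0) (k : Fin n → ℕ)
    {f : (Fin n → ℂ) → ℂ} (hf : Integrable f σ) :
    Integrable (fun ζ => (∏ i, starRingEnd ℂ (ζ i) ^ k i) * f ζ) σ := by
  refine hf.bdd_mul (c := 1) (Measurable.aestronglyMeasurable <| Finset.measurable_prod _
    fun i _ => (Complex.continuous_conj.measurable.comp (measurable_pi_apply i)).pow_const _) ?_
  filter_upwards [ae_iff.2 hσ] with ζ hζ
  simp [norm_prod, show ∀ i, ‖ζ i‖ = 1 from hζ]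

lemma integrable_cauchyKer [IsFiniteMeasure σ] (hσ : σ (torus n)ᶜ = 0) {w : Fin n → ℂ}
    (hw : w ∈ polydisc n) : Integrable (fun ζ => cauchyKer ζ w) σ :=
  Integrable.of_bound (measurable_cauchyKer w).aestronglyMeasurable _
    ((ae_iff.2 hσ).mono fun _ hζ => norm_cauchyKer_le hζ hw)

lemma memLp_div_cauchyKer (hσ : σ (torus n)ᶜ = 0) {w : Fin n → ℂ} (hw : w ∈ polydisc n)
    {p : ENNReal} {q : (Fin n → ℂ) → ℂ} (hq : MemLp q p σ) :
    MemLp (fun ζ => q ζ / cauchyKer ζ w) p σ := by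
  refine hq.of_le_mul (c := 2 ^ n)
    (hq.1.aemeasurable.div (measurable_cauchyKer w).aemeasurable).aestronglyMeasurable ?_
  filter_upwards [ae_iff.2 hσ] with ζ hζ
  rw [div_eq_mul_inv, norm_mul, mul_comm]
  exact mul_le_mul_of_nonneg_right (norm_inv_cauchyKer_le hζ hw) (norm_nonneg _)

end TorusMeasures

lemma IsNullSetForAnnihilators.ae_eq_zero_of_conj_moments_eq_zero {n : ℕ}
    {N : Set (Fin n → ℂ)} (hN : IsNullSetForAnnihilators n N) (hNm : MeasurableSet N)
    {ρ : Measure (Fin n → ℂ)} [IsFiniteMeasure ρ] (hρ : ρ (torus n)ᶜ = 0)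
    {h : (Fin n → ℂ) → ℂ} (hh : Integrable h ρ)
    (hmom : ∀ k : Fin n → ℕ, ∫ ζ, (∏ i, starRingEnd ℂ (ζ i) ^ k i) * h ζ ∂ρ = 0) :
    ∀ᵐ ζ ∂ρ, ζ ∈ N → h ζ = 0 := by
  have hconj : Integrable (fun ζ => starRingEnd ℂ (h ζ)) ρ :=
    Complex.conjLIE.integrable_comp_iff.2 hh
  have hzero := hN ρ _ ‹_› hρ hconj fun k => by
    simpa [← integral_conj, map_prod] using congrArg (starRingEnd ℂ) (hmom k)
  rw [lintegral_eq_zero_iff' hconj.1.aemeasurable.nnnorm.coe_nnreal_ennreal.restrict] at hzero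
  refine (ae_restrict_iff' hNm).1 (hzero.mono fun ζ hζ => ?_)
  simpa using hζ

theorem ae_rnDeriv_eq_div_cauchyKer_mul_of_mem_null_set {n : ℕ} {σ₁ σ₂ : Measure (Fin n → ℂ)}
    [IsFiniteMeasure σ₁] [IsFiniteMeasure σ₂] (hσ₁ : σ₁ (torus n)ᶜ = 0)
    (hσ₂ : σ₂ (torus n)ᶜ = 0) {w : Fin n → ℂ} (hw : w ∈ polydisc n)
    {q : (Fin n → ℂ) → ℂ} (hq : Integrable q σ₂)
    (hvanish : ∀ k : Fin n → ℕ,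
      ∫ ζ, (∏ i, starRingEnd ℂ (ζ i) ^ k i) * cauchyKer ζ w ∂σ₁ =
      ∫ ζ, (∏ i, starRingEnd ℂ (ζ i) ^ k i) * q ζ ∂σ₂)
    {N : Set (Fin n → ℂ)} (hN : MeasurableSet N) (hNnull : IsNullSetForAnnihilators n N) :
    ∀ᵐ ζ ∂(σ₁ + σ₂), ζ ∈ N → ((σ₁.rnDeriv (σ₁ + σ₂) ζ).toReal : ℂ) =
      q ζ / cauchyKer ζ w * (σ₂.rnDeriv (σ₁ + σ₂) ζ).toReal := by
  have h₁ : σ₁ ≪ σ₁ + σ₂ := Measure.AbsolutelyContinuous.rfl.add_right σ₂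
  have h₂ : σ₂ ≪ σ₁ + σ₂ := Measure.AbsolutelyContinuous.rfl.add_right' σ₁
  have hρ : (σ₁ + σ₂) (torus n)ᶜ = 0 := by simp [hσ₁, hσ₂]
  have hC := integrable_cauchyKer hσ₁ hw
  set h := fun ζ => (σ₁.rnDeriv (σ₁ + σ₂) ζ).toReal • cauchyKer ζ w -
    (σ₂.rnDeriv (σ₁ + σ₂) ζ).toReal • q ζ with h_def
  have hh : Integrable h (σ₁ + σ₂) := integrable_rnDeriv_smul_sub_rnDeriv_smul h₁ h₂ hC hq
  have hmom (k : Fin n → ℕ) : ∫ ζ, (∏ i, starRingEnd ℂ (ζ i) ^ k i) * h ζ ∂(σ₁ + σ₂) = 0 := by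
    rw [← sub_eq_zero.2 (hvanish k), ← integral_rnDeriv_smul_sub_rnDeriv_smul h₁ h₂
      (integrable_conj_monomial_mul hσ₁ k hC) (integrable_conj_monomial_mul hσ₂ k hq)]
    simp only [h_def, mul_sub, mul_smul_comm]
  filter_upwards [hNnull.ae_eq_zero_of_conj_moments_eq_zero hN hρ hh hmom, ae_iff.2 hρ]
    with ζ hzero hζ hζN
  rw [div_mul_eq_mul_div, eq_div_iff (cauchyKer_ne_zero hζ hw)]
  simpa [h_def, Complex.real_smul, sub_eq_zero, mul_comm] using hzero hζN

theorem restriction_to_null_set_absolutely_continuous_general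
    (n : ℕ)
    (σ₁ σ₂ : Measure (Fin n → ℂ))
    (hσ₁fin : IsFiniteMeasure σ₁) (hσ₂fin : IsFiniteMeasure σ₂)
    (hσ₁car : σ₁ (torus n)ᶜ = 0) (hσ₂car : σ₂ (torus n)ᶜ = 0)
    (w : Fin n → ℂ) (hw : w ∈ polydisc n)
    (q : (Fin n → ℂ) → ℂ) (hq : MemLp q 2 σ₂)
    -- the Cauchy transform of ν = C(·,w) σ₁ - q σ₂ vanishes identically
    (hvanish : ∀ k : Fin n → ℕ,
      ∫ ζ, (∏ i, (starRingEnd ℂ) (ζ i) ^ k i) * cauchyKer ζ w ∂σ₁ =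
      ∫ ζ, (∏ i, (starRingEnd ℂ) (ζ i) ^ k i) * q ζ ∂σ₂)
    (N : Set (Fin n → ℂ)) (hN : MeasurableSet N)
    (hNnull : IsNullSetForAnnihilators n N) :
    σ₁.restrict N ≪ σ₂ ∧
    (∫⁻ ζ, ((σ₁.restrict N).rnDeriv σ₂ ζ) ^ 2 ∂σ₂ < ⊤) ∧
    -- in fact σ₁|_N = (q / C(·,w)) σ₂|_N
    (∀ A : Set (Fin n → ℂ), MeasurableSet A →
      ((σ₁ (A ∩ N)).toReal : ℂ) = ∫ ζ in A ∩ N, q ζ / cauchyKer ζ w ∂σ₂) := by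
  obtain ⟨q', hq'meas, hqq'⟩ : AEMeasurable q σ₂ := hq.1.aemeasurable
  have hq' : MemLp q' 2 σ₂ := hq.ae_eq hqq'
  have hvanish' (k : Fin n → ℕ) :
      ∫ ζ, (∏ i, starRingEnd ℂ (ζ i) ^ k i) * cauchyKer ζ w ∂σ₁ =
      ∫ ζ, (∏ i, starRingEnd ℂ (ζ i) ^ k i) * q' ζ ∂σ₂ :=
    (hvanish k).trans (integral_congr_ae (hqq'.mono fun ζ hζ => by simp only [hζ]))
  have hdens := ae_rnDeriv_eq_div_cauchyKer_mul_of_mem_null_set hσ₁car hσ₂car hw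
    (hq'.integrable one_le_two) hvanish' hN hNnull
  have h₁ : σ₁ ≪ σ₁ + σ₂ := Measure.AbsolutelyContinuous.rfl.add_right σ₂
  have h₂ : σ₂ ≪ σ₁ + σ₂ := Measure.AbsolutelyContinuous.rfl.add_right' σ₁
  have hrestr := restrict_eq_withDensity_of_ae_rnDeriv_eq_mul h₁ h₂
    (hq'meas.div (measurable_cauchyKer w)).aemeasurable hN hdens
  refine ⟨hrestr ▸ withDensity_absolutelyContinuous _ _,
    hrestr ▸ lintegral_rnDeriv_withDensity_enorm_sq_lt_top
      ((memLp_div_cauchyKer hσ₂car hw hq').indicator hN), fun A hA => ?_⟩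
  rw [setIntegral_eq_of_ae_rnDeriv_eq_mul h₁ h₂ hN hdens hA]
  refine integral_congr_ae ((ae_restrict_of_ae hqq').mono fun ζ hζ => ?_)
  simp only [hζ]

theorem restriction_to_null_set_absolutely_continuous
    (n : ℕ) (hn : 1 ≤ n)
    (σ₁ σ₂ : Measure (Fin n → ℂ))
    (hσ₁fin : IsFiniteMeasure σ₁) (hσ₂fin : IsFiniteMeasure σ₂)
    (hσ₁car : σ₁ (torus n)ᶜ = 0) (hσ₂car : σ₂ (torus n)ᶜ = 0)
    (w : Fin n → ℂ) (hw : w ∈ polydisc n)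
    (q : (Fin n → ℂ) → ℂ) (hq : MemLp q 2 σ₂)
    -- the Cauchy transform of ν = C(·,w) σ₁ - q σ₂ vanishes identically
    (hvanish : ∀ k : Fin n → ℕ,
      ∫ ζ, (∏ i, (starRingEnd ℂ) (ζ i) ^ k i) * cauchyKer ζ w ∂σ₁ =
      ∫ ζ, (∏ i, (starRingEnd ℂ) (ζ i) ^ k i) * q ζ ∂σ₂)
    (N : Set (Fin n → ℂ)) (hN : MeasurableSet N)
    (hNnull : IsNullSetForAnnihilators n N) :
    σ₁.restrict N ≪ σ₂ ∧
    (∫⁻ ζ, ((σ₁.restrict N).rnDeriv σ₂ ζ) ^ 2 ∂σ₂ < ⊤) ∧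
    -- in fact σ₁|_N = (q / C(·,w)) σ₂|_N
    (∀ A : Set (Fin n → ℂ), MeasurableSet A →
      ((σ₁ (A ∩ N)).toReal : ℂ) = ∫ ζ in A ∩ N, q ζ / cauchyKer ζ w ∂σ₂) :=
  restriction_to_null_set_absolutely_continuous_general n σ₁ σ₂ hσ₁fin hσ₂fin hσ₁car hσ₂car w hw q
    hq hvanish N hN hNnull
end
end

section
/- Let p be a polynomial in C[z_1,z_2] of bidegree (m,n) with no zeros in D^2 such that p and its reflection p~ have no common nonconstant polynomial factor, and let b = p~/p be the associated rational inner function. Assume b is nonconstant, b(0,0) = 0, and that there exist a constant c in C and holomorphic functions f, g : D -> C with f(0) = g(0) = 0 such that (1 - z_1*z_2)/(1 - b(z_1,z_2)) = c + f(z_1) + g(z_2) for all (z_1,z_2) in D^2. Then there exists a in C with |a| <= 1/2 such that b(z_1,z_2) = (z_1*z_2 + a*z_1 + conj(a)*z_2)/(1 + a*z_1 + conj(a)*z_2) for all (z_1,z_2) in D^2. -/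
open MeasureTheory Complex Set Filter Topology MvPolynomial

noncomputable section

/-- The torus `T^2` as a subset of `ℂ × ℂ`. -/
def torus2 : Set (ℂ × ℂ) := {z | ‖z.1‖ = 1 ∧ ‖z.2‖ = 1}

/-- The open unit bidisc `D^2`. -/
def bidisc : Set (ℂ × ℂ) := {z | ‖z.1‖ < 1 ∧ ‖z.2‖ < 1}

/-- The product Cauchy kernel on the bidisc. -/
def cauchyKer2 (z w : ℂ × ℂ) : ℂ :=
  ((1 - z.1 * (starRingEnd ℂ) w.1) * (1 - z.2 * (starRingEnd ℂ) w.2))⁻¹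

/-- The product Poisson kernel on the bidisc. -/
def poissonKer2 (z ζ : ℂ × ℂ) : ℝ :=
  ((1 - ‖z.1‖ ^ 2) / ‖ζ.1 - z.1‖ ^ 2) *
    ((1 - ‖z.2‖ ^ 2) / ‖ζ.2 - z.2‖ ^ 2)

/-- `σ` is the Clark-Aleksandrov measure of `b : D^2 → D` at parameter `α`. -/
def IsClarkMeasure2 (b : ℂ × ℂ → ℂ) (α : ℂ) (σ : Measure (ℂ × ℂ)) : Prop :=
  IsFiniteMeasure σ ∧ σ torus2ᶜ = 0 ∧
    ∀ z ∈ bidisc, ∫ ζ, poissonKer2 z ζ ∂σ =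
      (1 - ‖b z‖ ^ 2) / ‖α - b z‖ ^ 2

/-- Normalized Haar (Lebesgue) measure on the unit circle `T`, as a measure on `ℂ`. -/
def haarCircle : Measure ℂ :=
  (ENNReal.ofReal (2 * Real.pi))⁻¹ •
    ((volume : Measure ℝ).restrict (Set.Ioc (0 : ℝ) (2 * Real.pi))).map
      (fun t : ℝ => Complex.exp (t * Complex.I))

/-- Normalized Haar (Lebesgue) measure on `T^2`, as a measure on `ℂ × ℂ`. -/
def haarTorus2 : Measure (ℂ × ℂ) :=
  (ENNReal.ofReal (2 * Real.pi))⁻¹ ^ 2 •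
    ((volume : Measure (ℝ × ℝ)).restrict
        (Set.Ioc (0 : ℝ) (2 * Real.pi) ×ˢ Set.Ioc (0 : ℝ) (2 * Real.pi))).map
      (fun t : ℝ × ℝ => (Complex.exp (t.1 * Complex.I), Complex.exp (t.2 * Complex.I)))

/-!
Write `b = Q / P` and `K = (1 - z₁ z₂) / (1 - b) = 1 + f z₁ + g z₂`. Cleared of denominators,
`(1 - z₁ z₂) P = (1 + f z₁ + g z₂) (P - Q)` holds on the dense set where `P ≠ Q`, hence on the
whole bidisc by continuity, so `P - Q` has no zeros there. On the bidisc `K` separates variables,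
`K z + 1 = K (z₁, 0) + K (0, z₂)`; cleared of denominators this is an identity between entire
functions, so it holds wherever both sides are defined. The reflection
`Q z = z₁ ^ m z₂ ^ n conj (P (1 / conj z))` turns into
`K z - 1 = z₁ z₂ (conj (K (1 / conj z)) - 1)`, so on a dense part of the bidisc
`f x + g y = x y (φ x + ψ y)`, with `φ`, `ψ` the reflected slices of `K - 1`. Comparing two
values of `y` shows `f x = a x`; continuing the slice `K (·, 0)` analytically gives
`φ x = conj a / x`, and then comparing two values of `x` gives `g y = conj a y`. Hence
`K = 1 + a z₁ + conj a z₂`, which is Favard's form of `b`, and `‖a‖ ≤ 1 / 2` since otherwise this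
denominator vanishes at `(-1 / (2 a), -1 / (2 conj a))`.
-/

open ComplexConjugate Metric

theorem MvPolynomial.analyticAt_eval_pair (q : MvPolynomial (Fin 2) ℂ) (z : ℂ × ℂ) :
    AnalyticAt ℂ (fun z : ℂ × ℂ => eval ![z.1, z.2] q) z := by
  have hcoord : ∀ i, AnalyticOnNhd ℂ (fun z : ℂ × ℂ => ![z.1, z.2] i) univ := by
    intro i
    fin_cases i
    exacts [analyticOnNhd_fst, analyticOnNhd_snd]
  exact AnalyticOnNhd.aeval_mvPolynomial hcoord q z (mem_univ z)

section Analytic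

variable {𝕜 E F : Type*} [NontriviallyNormedField 𝕜] [NormedAddCommGroup E] [NormedSpace 𝕜 E]
  [NormedAddCommGroup F] [NormedSpace 𝕜 F] [PreconnectedSpace E] {f : E → F}

theorem AnalyticOnNhd.eq_zero_of_eqOn_zero (hf : AnalyticOnNhd 𝕜 f univ) {U : Set E}
    (hU : IsOpen U) (hne : U.Nonempty) (h : EqOn f 0 U) : f = 0 := by
  obtain ⟨x, hx⟩ := hne
  funext y
  exact hf.eqOn_zero_of_preconnected_of_eventuallyEq_zero isPreconnected_univ (mem_univ x)
    (eventually_of_mem (hU.mem_nhds hx) h) (mem_univ y)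

theorem AnalyticOnNhd.dense_setOf_ne_zero (hf : AnalyticOnNhd 𝕜 f univ) (hf0 : f ≠ 0) :
    Dense {x | f x ≠ 0} := by
  refine dense_iff_inter_open.mpr fun U hU hne => ?_
  by_contra hempty
  exact hf0 <| hf.eq_zero_of_eqOn_zero hU hne fun x hx =>
    not_not.mp fun hfx => hempty ⟨x, hx, hfx⟩

end Analytic

theorem Dense.setOf_conj_inv {S : Set ℂ} (hS : Dense S) :
    Dense {x : ℂ | x ≠ 0 ∧ (conj x)⁻¹ ∈ S} := by
  refine dense_iff_inter_open.mpr fun U hU hne => ?_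
  obtain ⟨u, huU, hu0⟩ := (dense_compl_singleton (0 : ℂ)).inter_open_nonempty U hU hne
  have hV : IsOpen {y : ℂ | y ≠ 0 ∧ (conj y)⁻¹ ∈ U} :=
    (continuous_conj.continuousOn.inv₀ fun _ hy => (map_ne_zero _).mpr hy).isOpen_inter_preimage
      isOpen_ne hU
  obtain ⟨y, ⟨hy0, hyU⟩, hyS⟩ := hS.inter_open_nonempty _ hV
    ⟨(conj u)⁻¹, by simpa using hu0, by simpa using huU⟩
  exact ⟨(conj y)⁻¹, hyU, by simpa using hy0, by simpa using hyS⟩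

theorem Set.EqOn.of_dense_inter {X Y : Type*} [TopologicalSpace X] [TopologicalSpace Y]
    [T2Space Y] {f g : X → Y} {U S : Set X} (hU : IsOpen U) (hS : Dense S)
    (hf : ContinuousOn f U) (hg : ContinuousOn g U) (h : EqOn f g (U ∩ S)) : EqOn f g U :=
  h.of_subset_closure hf hg inter_subset_left (hS.open_subset_closure_inter hU)

theorem Dense.inter_open_nontrivial {X : Type*} [TopologicalSpace X] [T1Space X]
    [∀ x : X, (𝓝[≠] x).NeBot] {S U : Set X} (hS : Dense S) (hU : IsOpen U)
    (hne : U.Nonempty) : (U ∩ S).Nontrivial := by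
  obtain ⟨x, hx⟩ := hS.inter_open_nonempty U hU hne
  obtain ⟨y, hyU, hyS, hyx⟩ := (hS.sdiff_singleton x).inter_open_nonempty U hU hne
  exact ⟨x, hx, y, ⟨hyU, hyS⟩, Ne.symm hyx⟩

section FunctionalEquation

variable {K : Type*} [Field K]

theorem eq_of_mul_add_eq_mul_add {a b c d x₁ x₂ : K} (hx : x₁ ≠ x₂)
    (h₁ : a * x₁ + b = c * x₁ + d) (h₂ : a * x₂ + b = c * x₂ + d) : b = d := by
  have hac : a = c := mul_right_cancel₀ (sub_ne_zero.mpr hx) (by linear_combination h₁ - h₂)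
  subst hac
  linear_combination h₁

theorem exists_affine_of_add_eq_mul_mul_add {f g φ ψ : K → K} {X Y : Set K}
    (hY : Y.Nontrivial) (h : ∀ x ∈ X, ∀ y ∈ Y, f x + g y = x * y * (φ x + ψ y)) :
    ∃ a β, ∀ x ∈ X, f x = a * x + β := by
  obtain ⟨s, hs, t, ht, hst⟩ := hY
  refine ⟨s * t * (ψ s - ψ t) / (t - s), (s * g t - t * g s) / (t - s), fun x hx => ?_⟩
  have hts : t - s ≠ 0 := sub_ne_zero.mpr hst.symm
  field_simp
  linear_combination t * h x hx s hs - s * h x hx t ht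

end FunctionalEquation

section FunctionalEquationOpen

variable {𝕜 : Type*} [NontriviallyNormedField 𝕜] {f g φ ψ : 𝕜 → 𝕜} {U X Y : Set 𝕜}

theorem exists_eq_mul_of_add_eq_mul_mul_add (hU : IsOpen U) (hU0 : 0 ∈ U) (hX : Dense X)
    (hY : Dense Y) (hf : ContinuousOn f U) (hf0 : f 0 = 0)
    (h : ∀ x ∈ U ∩ X, ∀ y ∈ U ∩ Y, f x + g y = x * y * (φ x + ψ y)) :
    ∃ a, ∀ x ∈ U, f x = a * x := by
  obtain ⟨a, β, hf_affine⟩ :=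
    exists_affine_of_add_eq_mul_mul_add (hY.inter_open_nontrivial hU ⟨0, hU0⟩) h
  have hf_eq : EqOn f (fun x => a * x + β) U :=
    EqOn.of_dense_inter hU hX hf (by fun_prop) hf_affine
  have hβ : β = 0 := by simpa [hf0, eq_comm] using hf_eq hU0
  exact ⟨a, fun x hx => by simpa [hβ] using hf_eq hx⟩

theorem eq_mul_of_add_eq_mul_mul_add (hU : IsOpen U) (hne : U.Nonempty) (hX : Dense X)
    (hY : Dense Y) (hg : ContinuousOn g U) {a c : 𝕜} (hf : ∀ x ∈ U, f x = a * x)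
    (hφ : ∀ x ∈ X, x ≠ 0 ∧ φ x = c / x)
    (h : ∀ x ∈ U ∩ X, ∀ y ∈ U ∩ Y, f x + g y = x * y * (φ x + ψ y)) :
    ∀ y ∈ U, g y = c * y := by
  refine EqOn.of_dense_inter hU hY hg (by fun_prop) fun y hy => ?_
  obtain ⟨x₁, hx₁, x₂, hx₂, hx⟩ := hX.inter_open_nontrivial hU hne
  have affine_in_x : ∀ x ∈ U ∩ X, a * x + g y = (y * ψ y) * x + c * y := by
    intro x hx
    obtain ⟨hx0, hφx⟩ := hφ x hx.2
    rw [← hf x hx.1, h x hx y hy, hφx]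
    field_simp
    ring
  exact eq_of_mul_add_eq_mul_add hx (affine_in_x x₁ hx₁) (affine_in_x x₂ hx₂)

end FunctionalEquationOpen

theorem bidisc_eq : bidisc = ball (0 : ℂ) 1 ×ˢ ball 0 1 := by
  ext z
  simp [bidisc]

theorem isOpen_bidisc : IsOpen bidisc := bidisc_eq ▸ isOpen_ball.prod isOpen_ball

theorem zero_mem_bidisc : (0 : ℂ × ℂ) ∈ bidisc := by simp [bidisc]

theorem one_sub_mul_ne_zero_of_mem_bidisc {z : ℂ × ℂ} (hz : z ∈ bidisc) :
    1 - z.1 * z.2 ≠ 0 := by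
  refine sub_ne_zero.mpr fun h => ?_
  have : ‖z.1 * z.2‖ < 1 := by
    rw [norm_mul]
    exact mul_lt_one_of_nonneg_of_lt_one_left (norm_nonneg _) hz.1 hz.2.le
  simp [← h] at this

theorem norm_le_half_of_forall_ne_zero {a : ℂ}
    (h : ∀ z ∈ bidisc, 1 + a * z.1 + conj a * z.2 ≠ 0) : ‖a‖ ≤ 1 / 2 := by
  by_contra! ha
  have ha0 : a ≠ 0 := by rintro rfl; norm_num at ha
  have hca0 : conj a ≠ 0 := (map_ne_zero _).mpr ha0
  have hnorm : ‖(2 * a)⁻¹‖ < 1 := by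
    rw [norm_inv, norm_mul, Complex.norm_two]
    exact inv_lt_one_of_one_lt₀ (by linarith)
  refine h (-(2 * a)⁻¹, -(2 * conj a)⁻¹) ⟨by simpa using hnorm, by simpa using hnorm⟩ ?_
  field_simp
  ring

/-- For `b = Q / P` this is `(1 - z₁ z₂) / (1 - b z)`, written so that it keeps its meaning
off the bidisc, where `P` may vanish. -/
def clarkQuotient (P Q : ℂ × ℂ → ℂ) (z : ℂ × ℂ) : ℂ :=
  (1 - z.1 * z.2) * P z / (P z - Q z)

section ClarkQuotient

attribute [local fun_prop] analyticAt_fst analyticAt_snd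

variable {P Q : ℂ × ℂ → ℂ}

theorem clarkQuotient_eq_div {z : ℂ × ℂ} (hP : P z ≠ 0) :
    clarkQuotient P Q z = (1 - z.1 * z.2) / (1 - Q z / P z) := by
  rw [clarkQuotient, one_sub_div hP, div_div_eq_mul_div]

theorem sub_ne_zero_of_clarkQuotient_eq (hPa : ∀ z, AnalyticAt ℂ P z)
    (hQa : ∀ z, AnalyticAt ℂ Q z) (hP : ∀ z ∈ bidisc, P z ≠ 0) (hQ0 : Q 0 = 0) {f g : ℂ → ℂ}
    (hf : ContinuousOn f (ball 0 1)) (hg : ContinuousOn g (ball 0 1))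
    (hK : ∀ z ∈ bidisc, clarkQuotient P Q z = 1 + f z.1 + g z.2) :
    ∀ z ∈ bidisc, P z - Q z ≠ 0 := by
  have hdense : Dense {z | P z - Q z ≠ 0} :=
    AnalyticOnNhd.dense_setOf_ne_zero (fun z _ => (hPa z).sub (hQa z)) fun h =>
      hP 0 zero_mem_bidisc (by simpa [hQ0] using congrFun h 0)
  have hcont : ContinuousOn (fun z : ℂ × ℂ => 1 + f z.1 + g z.2) bidisc := by
    rw [bidisc_eq]
    exact (continuousOn_const.add (hf.comp continuousOn_fst fun z hz => hz.1)).add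
      (hg.comp continuousOn_snd fun z hz => hz.2)
  have hcleared : EqOn (fun z => (1 - z.1 * z.2) * P z)
      (fun z => (1 + f z.1 + g z.2) * (P z - Q z)) bidisc := by
    refine EqOn.of_dense_inter isOpen_bidisc hdense ?_ ?_ fun z ⟨hz, hE⟩ => ?_
    · exact ContinuousOn.mul (by fun_prop) fun z _ => (hPa z).continuousAt.continuousWithinAt
    · exact hcont.mul fun z _ => ((hPa z).sub (hQa z)).continuousAt.continuousWithinAt
    · simp only [← hK z hz, clarkQuotient]
      exact (div_mul_cancel₀ _ hE).symm
  intro z hz hE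
  exact mul_ne_zero (one_sub_mul_ne_zero_of_mem_bidisc hz) (hP z hz)
    (by simpa [hE] using hcleared hz)

theorem clarkQuotient_add_one_eq (hPa : ∀ z, AnalyticAt ℂ P z) (hQa : ∀ z, AnalyticAt ℂ Q z)
    (hE : ∀ z ∈ bidisc, P z - Q z ≠ 0)
    (hsep : ∀ z ∈ bidisc,
      clarkQuotient P Q z + 1 = clarkQuotient P Q (z.1, 0) + clarkQuotient P Q (0, z.2))
    {z : ℂ × ℂ} (hz : P z - Q z ≠ 0) (hz₁ : P (z.1, 0) - Q (z.1, 0) ≠ 0)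
    (hz₂ : P (0, z.2) - Q (0, z.2) ≠ 0) :
    clarkQuotient P Q z + 1 = clarkQuotient P Q (z.1, 0) + clarkQuotient P Q (0, z.2) := by
  let E : ℂ × ℂ → ℂ := fun z => P z - Q z
  let G : ℂ × ℂ → ℂ := fun z => ((1 - z.1 * z.2) * P z + E z) * E (z.1, 0) * E (0, z.2) -
    (P (z.1, 0) * E (0, z.2) + P (0, z.2) * E (z.1, 0)) * E z
  have hG : G = 0 := by
    refine AnalyticOnNhd.eq_zero_of_eqOn_zero (𝕜 := ℂ) (fun z _ => by simp only [G, E]; fun_prop)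
      isOpen_bidisc ⟨0, zero_mem_bidisc⟩ fun w hw => ?_
    have h := hsep w hw
    have hw₁ := hE (w.1, 0) ⟨hw.1, by simp⟩
    have hw₂ := hE (0, w.2) ⟨by simp, hw.2⟩
    have hw' := hE w hw
    simp only [clarkQuotient, mul_zero, zero_mul, sub_zero] at h
    field_simp at h
    simp only [G, E, Pi.zero_apply]
    linear_combination h
  have h := congrFun hG z
  simp only [clarkQuotient, mul_zero, zero_mul, sub_zero]
  field_simp
  simp only [G, E, Pi.zero_apply] at h
  linear_combination h

theorem clarkQuotient_sub_one_eq_conj {m n : ℕ}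
    (hrefl : ∀ z : ℂ × ℂ, z.1 ≠ 0 → z.2 ≠ 0 →
      Q z = z.1 ^ m * z.2 ^ n * conj (P ((conj z.1)⁻¹, (conj z.2)⁻¹)))
    {x y : ℂ} (hx : x ≠ 0) (hy : y ≠ 0) (hE : P (x, y) - Q (x, y) ≠ 0) :
    P ((conj x)⁻¹, (conj y)⁻¹) - Q ((conj x)⁻¹, (conj y)⁻¹) ≠ 0 ∧
      clarkQuotient P Q (x, y) - 1 =
        x * y * (conj (clarkQuotient P Q ((conj x)⁻¹, (conj y)⁻¹)) - 1) := by
  set u := conj (P ((conj x)⁻¹, (conj y)⁻¹))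
  set v := conj (Q ((conj x)⁻¹, (conj y)⁻¹))
  have hQ : Q (x, y) = x ^ m * y ^ n * u := hrefl (x, y) hx hy
  have hP : P (x, y) = x ^ m * y ^ n * v := by
    have h := hrefl ((conj x)⁻¹, (conj y)⁻¹) (by simpa using hx) (by simpa using hy)
    simp only [map_inv₀, conj_conj, inv_inv] at h
    simp only [v, h, map_mul, map_pow, map_inv₀, conj_conj, inv_pow]
    field_simp
  have huv : u - v ≠ 0 := fun h => hE (by rw [hP, hQ]; linear_combination -(x ^ m * y ^ n) * h)
  refine ⟨fun h => huv (by simpa [u, v] using congrArg conj h), ?_⟩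
  have hconj : conj (clarkQuotient P Q ((conj x)⁻¹, (conj y)⁻¹)) =
      (1 - x⁻¹ * y⁻¹) * u / (u - v) := by
    simp [clarkQuotient, u, v]
  rw [hconj, clarkQuotient, hP, hQ]
  have hvu : v - u ≠ 0 := sub_ne_zero.mpr (sub_ne_zero.mp huv).symm
  field_simp
  ring

theorem add_eq_mul_mul_conj_clarkQuotient {m n : ℕ} {f g : ℂ → ℂ}
    (hPa : ∀ z, AnalyticAt ℂ P z) (hQa : ∀ z, AnalyticAt ℂ Q z)
    (hrefl : ∀ z : ℂ × ℂ, z.1 ≠ 0 → z.2 ≠ 0 →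
      Q z = z.1 ^ m * z.2 ^ n * conj (P ((conj z.1)⁻¹, (conj z.2)⁻¹)))
    (hE : ∀ z ∈ bidisc, P z - Q z ≠ 0)
    (hK : ∀ z ∈ bidisc, clarkQuotient P Q z = 1 + f z.1 + g z.2) (hf0 : f 0 = 0) (hg0 : g 0 = 0) :
    ∀ x ∈ ball 0 1 ∩ {x | x ≠ 0 ∧ P ((conj x)⁻¹, 0) - Q ((conj x)⁻¹, 0) ≠ 0},
    ∀ y ∈ ball 0 1 ∩ {y | y ≠ 0 ∧ P (0, (conj y)⁻¹) - Q (0, (conj y)⁻¹) ≠ 0},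
      f x + g y = x * y * ((conj (clarkQuotient P Q ((conj x)⁻¹, 0)) - 1) +
        (conj (clarkQuotient P Q (0, (conj y)⁻¹)) - 1)) := by
  rintro x ⟨hx, hx0, hxE⟩ y ⟨hy, hy0, hyE⟩
  have hxy : (x, y) ∈ bidisc := ⟨mem_ball_zero_iff.mp hx, mem_ball_zero_iff.mp hy⟩
  have hsep : ∀ z ∈ bidisc,
      clarkQuotient P Q z + 1 = clarkQuotient P Q (z.1, 0) + clarkQuotient P Q (0, z.2) := by
    intro z hz
    rw [hK z hz, hK (z.1, 0) ⟨hz.1, by simp⟩, hK (0, z.2) ⟨by simp, hz.2⟩, hf0, hg0]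
    ring
  obtain ⟨hEinv, hrefl_xy⟩ := clarkQuotient_sub_one_eq_conj hrefl hx0 hy0 (hE _ hxy)
  have hsep_inv := clarkQuotient_add_one_eq hPa hQa hE hsep hEinv hxE hyE
  calc f x + g y = clarkQuotient P Q (x, y) - 1 := by rw [hK _ hxy]; ring
    _ = _ := by
      rw [hrefl_xy, eq_sub_of_add_eq hsep_inv, map_sub, map_add, map_one]
      ring

theorem clarkQuotient_fst_eq_of_forall_mem_ball (hPa : ∀ z, AnalyticAt ℂ P z)
    (hQa : ∀ z, AnalyticAt ℂ Q z) {a : ℂ}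
    (h : ∀ x ∈ ball (0 : ℂ) 1, P (x, 0) - Q (x, 0) ≠ 0 ∧ clarkQuotient P Q (x, 0) = 1 + a * x)
    {x : ℂ} (hx : P (x, 0) - Q (x, 0) ≠ 0) : clarkQuotient P Q (x, 0) = 1 + a * x := by
  let G : ℂ → ℂ := fun x => P (x, 0) - (1 + a * x) * (P (x, 0) - Q (x, 0))
  have hG : G = 0 := by
    refine AnalyticOnNhd.eq_zero_of_eqOn_zero (𝕜 := ℂ) (fun z _ => by simp only [G]; fun_prop)
      isOpen_ball ⟨0, mem_ball_self one_pos⟩ fun w hw => ?_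
    obtain ⟨hwE, hwK⟩ := h w hw
    simp only [clarkQuotient, mul_zero, sub_zero, one_mul] at hwK
    simp only [G, Pi.zero_apply, ← hwK]
    field_simp
    ring
  have := congrFun hG x
  simp only [clarkQuotient, mul_zero, sub_zero, one_mul]
  field_simp
  simp only [G, Pi.zero_apply] at this
  linear_combination this

theorem dense_setOf_conj_inv_slice_sub_ne_zero (hPa : ∀ z, AnalyticAt ℂ P z)
    (hQa : ∀ z, AnalyticAt ℂ Q z) (h0 : P 0 - Q 0 ≠ 0) :
    Dense {x : ℂ | x ≠ 0 ∧ P ((conj x)⁻¹, 0) - Q ((conj x)⁻¹, 0) ≠ 0} ∧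
      Dense {y : ℂ | y ≠ 0 ∧ P (0, (conj y)⁻¹) - Q (0, (conj y)⁻¹) ≠ 0} := by
  constructor
  · refine Dense.setOf_conj_inv (AnalyticOnNhd.dense_setOf_ne_zero
      (f := fun w => P (w, 0) - Q (w, 0)) (fun w _ => by fun_prop) fun h => h0 ?_)
    exact congrFun h 0
  · refine Dense.setOf_conj_inv (AnalyticOnNhd.dense_setOf_ne_zero
      (f := fun w => P (0, w) - Q (0, w)) (fun w _ => by fun_prop) fun h => h0 ?_)
    exact congrFun h 0

theorem conj_clarkQuotient_conj_inv_fst_sub_one {f g : ℂ → ℂ} (hPa : ∀ z, AnalyticAt ℂ P z)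
    (hQa : ∀ z, AnalyticAt ℂ Q z) (hE : ∀ z ∈ bidisc, P z - Q z ≠ 0)
    (hK : ∀ z ∈ bidisc, clarkQuotient P Q z = 1 + f z.1 + g z.2) (hg0 : g 0 = 0) {a : ℂ}
    (ha : ∀ x ∈ ball 0 1, f x = a * x) {x : ℂ}
    (hx : P ((conj x)⁻¹, 0) - Q ((conj x)⁻¹, 0) ≠ 0) :
    conj (clarkQuotient P Q ((conj x)⁻¹, 0)) - 1 = conj a / x := by
  have hslice : ∀ w ∈ ball (0 : ℂ) 1,
      P (w, 0) - Q (w, 0) ≠ 0 ∧ clarkQuotient P Q (w, 0) = 1 + a * w := fun w hw =>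
    have hw' : (w, 0) ∈ bidisc := ⟨mem_ball_zero_iff.mp hw, by simp⟩
    ⟨hE _ hw', by rw [hK _ hw', ha w hw, hg0, add_zero]⟩
  rw [clarkQuotient_fst_eq_of_forall_mem_ball hPa hQa hslice hx]
  simp [div_eq_mul_inv]

theorem norm_le_half_and_div_eq_of_clarkQuotient_eq (hP : ∀ z ∈ bidisc, P z ≠ 0)
    (hE : ∀ z ∈ bidisc, P z - Q z ≠ 0) {a : ℂ}
    (hK : ∀ z ∈ bidisc, clarkQuotient P Q z = 1 + a * z.1 + conj a * z.2) :
    ‖a‖ ≤ 1 / 2 ∧ ∀ z ∈ bidisc,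
      Q z / P z = (z.1 * z.2 + a * z.1 + conj a * z.2) / (1 + a * z.1 + conj a * z.2) := by
  have hden : ∀ z ∈ bidisc, 1 + a * z.1 + conj a * z.2 ≠ 0 := fun z hz =>
    hK z hz ▸ div_ne_zero (mul_ne_zero (one_sub_mul_ne_zero_of_mem_bidisc hz) (hP z hz)) (hE z hz)
  refine ⟨norm_le_half_of_forall_ne_zero hden, fun z hz => ?_⟩
  have h := hK z hz
  rw [clarkQuotient, div_eq_iff (hE z hz)] at h
  rw [div_eq_div_iff (hP z hz) (hden z hz)]
  linear_combination h

end ClarkQuotient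

theorem rif_with_degenerate_clark_quotient_is_favard_general
    (p pt : MvPolynomial (Fin 2) ℂ)
    (hp : ∀ z : ℂ × ℂ, z ∈ bidisc → MvPolynomial.eval ![z.1, z.2] p ≠ 0)
    -- pt is the reflection of p with respect to its bidegree
    (hpt : ∀ z : ℂ × ℂ, z.1 ≠ 0 → z.2 ≠ 0 →
      MvPolynomial.eval ![z.1, z.2] pt =
        z.1 ^ p.degreeOf 0 * z.2 ^ p.degreeOf 1 *
          (starRingEnd ℂ)
            (MvPolynomial.eval ![((starRingEnd ℂ) z.1)⁻¹, ((starRingEnd ℂ) z.2)⁻¹] p))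
    (b : ℂ × ℂ → ℂ)
    (hb : ∀ z : ℂ × ℂ, b z =
      MvPolynomial.eval ![z.1, z.2] pt / MvPolynomial.eval ![z.1, z.2] p)
    (hb0 : b (0, 0) = 0)
    (hdec : ∃ (c : ℂ) (f g : ℂ → ℂ),
      DifferentiableOn ℂ f (Metric.ball (0 : ℂ) 1) ∧
      DifferentiableOn ℂ g (Metric.ball (0 : ℂ) 1) ∧
      f 0 = 0 ∧ g 0 = 0 ∧
      ∀ z ∈ bidisc, (1 - z.1 * z.2) / (1 - b z) = c + f z.1 + g z.2) :
    ∃ a : ℂ, ‖a‖ ≤ 1 / 2 ∧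
      ∀ z ∈ bidisc, b z =
        (z.1 * z.2 + a * z.1 + (starRingEnd ℂ) a * z.2) /
          (1 + a * z.1 + (starRingEnd ℂ) a * z.2) := by
  obtain ⟨c, f, g, hf, hg, hf0, hg0, hfg⟩ := hdec
  set P : ℂ × ℂ → ℂ := fun z => eval ![z.1, z.2] p
  set Q : ℂ × ℂ → ℂ := fun z => eval ![z.1, z.2] pt
  have hPa : ∀ z, AnalyticAt ℂ P z := MvPolynomial.analyticAt_eval_pair p
  have hQa : ∀ z, AnalyticAt ℂ Q z := MvPolynomial.analyticAt_eval_pair pt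
  have hQ0 : Q 0 = 0 := by
    rw [hb, div_eq_zero_iff] at hb0
    exact hb0.resolve_right (hp 0 zero_mem_bidisc)
  have hc : c = 1 := by simpa [hb0, hf0, hg0] using (hfg (0, 0) zero_mem_bidisc).symm
  have hK : ∀ z ∈ bidisc, clarkQuotient P Q z = 1 + f z.1 + g z.2 := fun z hz => by
    rw [clarkQuotient_eq_div (hp z hz), ← hb, hfg z hz, hc]
  have hE := sub_ne_zero_of_clarkQuotient_eq hPa hQa hp hQ0 hf.continuousOn hg.continuousOn hK
  have hfun := add_eq_mul_mul_conj_clarkQuotient hPa hQa hpt hE hK hf0 hg0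
  obtain ⟨hX, hY⟩ := dense_setOf_conj_inv_slice_sub_ne_zero hPa hQa (hE 0 zero_mem_bidisc)
  obtain ⟨a, ha⟩ := exists_eq_mul_of_add_eq_mul_mul_add isOpen_ball (mem_ball_self one_pos)
    hX hY hf.continuousOn hf0 hfun
  have hga := eq_mul_of_add_eq_mul_mul_add isOpen_ball ⟨0, mem_ball_self one_pos⟩ hX hY
    hg.continuousOn ha (fun x hx => ⟨hx.1,
      conj_clarkQuotient_conj_inv_fst_sub_one hPa hQa hE hK hg0 ha hx.2⟩) hfun
  obtain ⟨ha_norm, hba⟩ := norm_le_half_and_div_eq_of_clarkQuotient_eq hp hE fun z hz => by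
    rw [hK z hz, ha _ (mem_ball_zero_iff.mpr hz.1), hga _ (mem_ball_zero_iff.mpr hz.2)]
  exact ⟨a, ha_norm, fun z hz => (hb z).trans (hba z hz)⟩

theorem rif_with_degenerate_clark_quotient_is_favard
    (p pt : MvPolynomial (Fin 2) ℂ)
    (hp : ∀ z : ℂ × ℂ, z ∈ bidisc → MvPolynomial.eval ![z.1, z.2] p ≠ 0)
    -- pt is the reflection of p with respect to its bidegree
    (hpt : ∀ z : ℂ × ℂ, z.1 ≠ 0 → z.2 ≠ 0 →
      MvPolynomial.eval ![z.1, z.2] pt =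
        z.1 ^ p.degreeOf 0 * z.2 ^ p.degreeOf 1 *
          (starRingEnd ℂ)
            (MvPolynomial.eval ![((starRingEnd ℂ) z.1)⁻¹, ((starRingEnd ℂ) z.2)⁻¹] p))
    -- p and pt have no common nonconstant factor
    (hcoprime : ¬ ∃ q : MvPolynomial (Fin 2) ℂ, 0 < q.totalDegree ∧ q ∣ p ∧ q ∣ pt)
    (b : ℂ × ℂ → ℂ)
    (hb : ∀ z : ℂ × ℂ, b z =
      MvPolynomial.eval ![z.1, z.2] pt / MvPolynomial.eval ![z.1, z.2] p)
    (hb_nc : ¬ ∃ c : ℂ, ∀ z ∈ bidisc, b z = c)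
    (hb0 : b (0, 0) = 0)
    (hdec : ∃ (c : ℂ) (f g : ℂ → ℂ),
      DifferentiableOn ℂ f (Metric.ball (0 : ℂ) 1) ∧
      DifferentiableOn ℂ g (Metric.ball (0 : ℂ) 1) ∧
      f 0 = 0 ∧ g 0 = 0 ∧
      ∀ z ∈ bidisc, (1 - z.1 * z.2) / (1 - b z) = c + f z.1 + g z.2) :
    ∃ a : ℂ, ‖a‖ ≤ 1 / 2 ∧
      ∀ z ∈ bidisc, b z =
        (z.1 * z.2 + a * z.1 + (starRingEnd ℂ) a * z.2) /
          (1 + a * z.1 + (starRingEnd ℂ) a * z.2) :=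
  rif_with_degenerate_clark_quotient_is_favard_general p pt hp hpt b hb hb0 hdec
end
end

section
/- In the polynomial ring C[X,Y], the ideal generated by p_2 = 2 - X*Y - X^2*Y and p_2~ = 2*X^2*Y - X - 1 is equal to the ideal generated by (X-1)^2 and 3*X + 2*Y - 5. -/
open MvPolynomial

/-! Each generator of either ideal is an explicit combination of the two generators of the other,
up to the factor `2`, which is a unit in `ℂ[X, Y]`. -/

theorem Ideal.mem_span_pair_of_isUnit_mul {R : Type*} [CommSemiring R] {a b c f : R}
    (hc : IsUnit c) (u v : R) (h : u * a + v * b = c * f) : f ∈ Ideal.span {a, b} :=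
  (Ideal.unit_mul_mem_iff_mem _ hc).mp (Ideal.mem_span_pair.mpr ⟨u, v, h⟩)

theorem MvPolynomial.isUnit_two {σ R : Type*} [CommSemiring R] (h : IsUnit (2 : R)) :
    IsUnit (2 : MvPolynomial σ R) := by
  rw [← map_ofNat C 2]
  exact h.map C

theorem ideal_p2_pt2_eq :
    Ideal.span ({2 - X 0 * X 1 - X 0 ^ 2 * X 1,
        2 * X 0 ^ 2 * X 1 - X 0 - 1} : Set (MvPolynomial (Fin 2) ℂ)) =
      Ideal.span ({(X 0 - 1) ^ 2, 3 * X 0 + 2 * X 1 - 5} :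
        Set (MvPolynomial (Fin 2) ℂ)) := by
  have h2 := MvPolynomial.isUnit_two (σ := Fin 2) (IsUnit.mk0 (2 : ℂ) two_ne_zero)
  apply le_antisymm <;> rw [Ideal.span_le, Set.pair_subset_iff]
  · exact ⟨Ideal.mem_span_pair_of_isUnit_mul h2 (3 * X 0 + 4) (-(X 0 + X 0 ^ 2)) (by ring),
      Ideal.mem_span_pair_of_isUnit_mul h2 (-6 * X 0 - 2) (2 * X 0 ^ 2) (by ring)⟩
  · exact ⟨Ideal.mem_span_pair_of_isUnit_mul h2 (-4 * X 0) (-(2 + 2 * X 0)) (by ring),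
      Ideal.mem_span_pair_of_isUnit_mul h2 (-8 * X 0 * X 1 - 8) (-6 - 4 * X 1 - 4 * X 0 * X 1)
        (by ring)⟩
end

section
/- In the polynomial ring C[X,Y], the polynomial p_1 = 4 - Y - 3*X - X*Y + X^2 does not belong to the ideal generated by p_2 = 2 - X*Y - X^2*Y and p_2~ = 2*X^2*Y - X - 1. -/
open MeasureTheory Complex Set Filter Topology MvPolynomial

noncomputable section

open DualNumber

/-!
Both generators vanish at `(1, 1)`, where their gradients `(-3, -2)` and `(3, 2)` are
parallel. Hence every element of the ideal vanishes at the first-order point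
`(1 + 2ε, 1 - 3ε)` over the dual numbers `ℂ[ε]`, whose direction `(2, -3)` is orthogonal to
both gradients, whereas `p₁` evaluates there to `2ε ≠ 0`.
-/

theorem Ideal.notMem_span_of_map_eq_zero {R S : Type*} [CommSemiring R] [Semiring S]
    (f : R →+* S) {s : Set R} (hs : ∀ a ∈ s, f a = 0) {x : R} (hx : f x ≠ 0) :
    x ∉ Ideal.span s :=
  fun h => hx <| (Ideal.span_le.mpr (fun a ha => RingHom.mem_ker.mpr (hs a ha)) h :)

theorem DualNumber.smul_eps_ne_zero {R : Type*} [Semiring R] {r : R} (hr : r ≠ 0) :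
    r • (ε : R[ε]) ≠ 0 :=
  fun h => hr (by simpa using congrArg TrivSqZeroExt.snd h)

def tangentJet : MvPolynomial (Fin 2) ℂ →ₐ[ℂ] ℂ[ε] :=
  aeval ![1 + 2 * ε, 1 - 3 * ε]

lemma tangentJet_X_zero : tangentJet (X 0) = 1 + 2 * ε := by
  simp [tangentJet]

lemma tangentJet_X_one : tangentJet (X 1) = 1 - 3 * ε := by
  simp [tangentJet]

lemma tangentJet_p2 : tangentJet (2 - X 0 * X 1 - X 0 ^ 2 * X 1) = 0 := by
  simp only [map_sub, map_mul, map_pow, map_ofNat, tangentJet_X_zero, tangentJet_X_one]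
  linear_combination (14 + 12 * ε) * (eps_pow_two : (ε : ℂ[ε]) ^ 2 = 0)

lemma tangentJet_p2_reflection : tangentJet (2 * X 0 ^ 2 * X 1 - X 0 - 1) = 0 := by
  simp only [map_sub, map_mul, map_pow, map_ofNat, map_one, tangentJet_X_zero,
    tangentJet_X_one]
  linear_combination (-16 - 24 * ε) * (eps_pow_two : (ε : ℂ[ε]) ^ 2 = 0)

lemma tangentJet_p1 :
    tangentJet (4 - X 1 - 3 * X 0 - X 0 * X 1 + X 0 ^ 2) = (2 : ℂ) • ε := by
  simp only [map_add, map_sub, map_mul, map_pow, map_ofNat, tangentJet_X_zero,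
    tangentJet_X_one, Algebra.smul_def]
  linear_combination 10 * (eps_pow_two : (ε : ℂ[ε]) ^ 2 = 0)

theorem p1_not_in_ideal_p2_pt2 :
    (4 - X 1 - 3 * X 0 - X 0 * X 1 + X 0 ^ 2 : MvPolynomial (Fin 2) ℂ) ∉
      Ideal.span ({2 - X 0 * X 1 - X 0 ^ 2 * X 1,
        2 * X 0 ^ 2 * X 1 - X 0 - 1} : Set (MvPolynomial (Fin 2) ℂ)) := by
  refine Ideal.notMem_span_of_map_eq_zero tangentJet.toRingHom ?_ ?_
  · rintro p (rfl | rfl)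
    · exact tangentJet_p2
    · exact tangentJet_p2_reflection
  · change tangentJet _ ≠ 0
    rw [tangentJet_p1]
    exact smul_eps_ne_zero two_ne_zero
end
end

section
/- Let alpha be a unimodular complex number and let mu be a complex Borel measure on T^2 such that the integral over T^2 of zeta_1^{k_1}*zeta_2^{k_2} dmu(zeta) equals 0 for every pair of nonnegative integers (k_1,k_2) (i.e. mu annihilates the bidisc algebra A(D^2)). Then the total variation |mu| of the anti-diagonal line {(zeta_1,zeta_2) in T^2 : zeta_1*zeta_2 = alpha} is zero. -/
open MeasureTheory Complex Set Filter Topology MvPolynomial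

noncomputable section

/-! The function `φ ζ = (1 + conj α * ζ₁ζ₂) / 2` peaks on the anti-diagonal `L`: on `T²` it
equals `1` on `L` and has modulus `< 1` off `L`. Each `φⁿ ζ₁ᵃ ζ₂ᵇ` is a holomorphic polynomial,
so dominated convergence shows that `f ρ|_L` still annihilates all holomorphic monomials. On `L`
we have `conj ζ₁ = conj α * ζ₂` and `conj ζ₂ = conj α * ζ₁`, so the holomorphic polynomials
restricted to `L` form a self-adjoint algebra separating points, dense in `C(L, ℂ)` by
Stone–Weierstrass. Hence `f ρ|_L` annihilates `C(L, ℂ)`, and `f = 0` almost everywhere on `L`. -/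

open scoped BoundedContinuousFunction ComplexConjugate

section PeakFunction

variable {X 𝕜 : Type*} [MeasurableSpace X] [RCLike 𝕜] {μ : Measure X} {φ g : X → 𝕜}

theorem tendsto_integral_pow_mul (hφ : Measurable φ) (hpeak : ∀ᵐ x ∂μ, φ x = 1 ∨ ‖φ x‖ < 1)
    (hg : Integrable g μ) :
    Tendsto (fun n : ℕ => ∫ x, φ x ^ n * g x ∂μ) atTop (𝓝 (∫ x in φ ⁻¹' {1}, g x ∂μ)) := by
  rw [← integral_indicator (hφ (measurableSet_singleton 1))]
  refine tendsto_integral_of_dominated_convergence (‖g ·‖)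
    (fun n => ((hφ.pow_const n).aestronglyMeasurable.mul hg.1)) hg.norm (fun n => ?_) ?_
  · filter_upwards [hpeak] with x hx
    rw [norm_mul, norm_pow]
    refine mul_le_of_le_one_left (norm_nonneg _) (pow_le_one₀ (norm_nonneg _) ?_)
    rcases hx with h | h
    · simp [h]
    · exact h.le
  · filter_upwards [hpeak] with x hx
    rcases hx with h | h
    · simp [h]
    · rw [indicator_of_notMem fun h' => by simp_all]
      simpa using (tendsto_pow_atTop_nhds_zero_of_norm_lt_one h).mul_const (g x)

end PeakFunction

theorem Complex.one_add_div_two_eq_one_or_norm_lt_one {w : ℂ} (hw : ‖w‖ = 1) :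
    (1 + w) / 2 = 1 ∨ ‖(1 + w) / 2‖ < 1 := by
  rcases eq_or_ne w 1 with rfl | hne
  · left; norm_num
  · right
    have := (norm_midpoint_lt_iff (x := (1 : ℂ)) (y := w) (by simp [hw])).2 hne.symm
    have hmid : (1 + w) / 2 = (1 / 2 : ℝ) • (1 + w) := by
      rw [Complex.real_smul]; push_cast; ring
    simpa [hmid] using this

section Annihilator

variable {X : Type*} [TopologicalSpace X] [MeasurableSpace X] [BorelSpace X]
  {μ : Measure X} {f : X → ℂ}

theorem ae_eq_zero_of_forall_integral_mul_eq_zero [HasOuterApproxClosed X] (hf : Integrable f μ)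
    (h : ∀ φ : X →ᵇ ℂ, ∫ x, φ x * f x ∂μ = 0) : f =ᵐ[μ] 0 := by
  refine ae_eq_zero_of_forall_setIntegral_isClosed_eq_zero hf fun F hF => ?_
  let φ : ℕ → X →ᵇ ℂ := fun n => BoundedContinuousFunction.ofNormedAddCommGroup
    (fun x => ((hF.apprSeq n x : ℝ) : ℂ)) (by fun_prop) 1
    (fun x => by simpa using HasOuterApproxClosed.apprSeq_apply_le_one hF n x)
  have hlim : Tendsto (fun n => ∫ x, φ n x * f x ∂μ) atTop (𝓝 (∫ x in F, f x ∂μ)) := by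
    rw [← integral_indicator hF.measurableSet]
    refine tendsto_integral_of_dominated_convergence (‖f ·‖)
      (fun n => (φ n).continuous.aestronglyMeasurable.mul hf.1) hf.norm (fun n => ?_) ?_
    · refine ae_of_all _ fun x => ?_
      rw [norm_mul]
      refine mul_le_of_le_one_left (norm_nonneg _) ?_
      simpa [φ] using HasOuterApproxClosed.apprSeq_apply_le_one hF n x
    · refine ae_of_all _ fun x => ?_
      have := ((NNReal.continuous_coe.tendsto _).comp
        (tendsto_pi_nhds.1 (HasOuterApproxClosed.tendsto_apprSeq hF) x))
      have := ((Complex.continuous_ofReal.tendsto _).comp this).mul_const (f x)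
      by_cases hx : x ∈ F <;> simpa [φ, hx] using this
  simp only [h, tendsto_const_nhds_iff] at hlim
  exact hlim.symm

theorem ContinuousMap.integrable_mul [CompactSpace X] (φ : C(X, ℂ)) (hf : Integrable f μ) :
    Integrable (fun x => φ x * f x) μ :=
  hf.bdd_mul φ.continuous.aestronglyMeasurable (ae_of_all _ φ.norm_coe_le_norm)

variable [CompactSpace X]

def integralMulCLM (hf : Integrable f μ) : C(X, ℂ) →L[ℂ] ℂ :=
  LinearMap.mkContinuous
    { toFun := fun φ => ∫ x, φ x * f x ∂μ
      map_add' := fun φ ψ => by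
        simp only [ContinuousMap.add_apply, add_mul]
        exact integral_add (φ.integrable_mul hf) (ψ.integrable_mul hf)
      map_smul' := fun c φ => by
        simp only [ContinuousMap.smul_apply, smul_eq_mul, mul_assoc, integral_const_mul,
          RingHom.id_apply] }
    (∫ x, ‖f x‖ ∂μ) fun φ => by
      rw [mul_comm, ← integral_const_mul]
      refine norm_integral_le_of_norm_le (hf.norm.const_mul _) (ae_of_all _ fun x => ?_)
      rw [norm_mul]
      exact mul_le_mul_of_nonneg_right (φ.norm_coe_le_norm x) (norm_nonneg _)

@[simp]
theorem integralMulCLM_apply (hf : Integrable f μ) (φ : C(X, ℂ)) :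
    integralMulCLM hf φ = ∫ x, φ x * f x ∂μ :=
  rfl

theorem ae_eq_zero_of_integral_mul_eq_zero_of_separatesPoints [HasOuterApproxClosed X]
    {A : StarSubalgebra ℂ C(X, ℂ)} (hA : A.SeparatesPoints) (hf : Integrable f μ)
    (h : ∀ φ ∈ A, ∫ x, φ x * f x ∂μ = 0) : f =ᵐ[μ] 0 := by
  have hclosure : closure (A : Set C(X, ℂ)) ⊆ {φ | integralMulCLM hf φ = 0} :=
    closure_minimal (fun φ hφ => by simpa using h φ hφ)
      (isClosed_eq (integralMulCLM hf).continuous continuous_const)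
  refine ae_eq_zero_of_forall_integral_mul_eq_zero hf fun φ => ?_
  have hφ : φ.toContinuousMap ∈ A.topologicalClosure := by
    rw [ContinuousMap.starSubalgebra_topologicalClosure_eq_top_of_separatesPoints A hA]
    trivial
  simpa using hclosure hφ

end Annihilator

theorem StarAlgebra.adjoin_toSubalgebra_le_of_star_subset {R A : Type*} [CommSemiring R]
    [StarRing R] [Semiring A] [StarRing A] [Algebra R A] [StarModule R A] {s : Set A}
    (hs : star s ⊆ Algebra.adjoin R s) :
    (StarAlgebra.adjoin R s).toSubalgebra ≤ Algebra.adjoin R s := by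
  rw [StarAlgebra.adjoin_toSubalgebra]
  exact Algebra.adjoin_le (union_subset Algebra.subset_adjoin hs)

theorem Algebra.star_pair_subset_adjoin {R A : Type*} [CommSemiring R] [Semiring A] [StarRing A]
    [Algebra R A] {u v : A} {c d : R} (hu : star u = c • v) (hv : star v = d • u) :
    star {u, v} ⊆ (Algebra.adjoin R {u, v} : Set A) := by
  intro φ hφ
  rw [Set.mem_star, mem_insert_iff, mem_singleton_iff] at hφ
  rw [← star_star φ]
  rcases hφ with hφ | hφ
  · rw [hφ, hu]
    exact Subalgebra.smul_mem _ (Algebra.subset_adjoin (by simp)) _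
  · rw [hφ, hv]
    exact Subalgebra.smul_mem _ (Algebra.subset_adjoin (by simp)) _

theorem Algebra.adjoin_pair_toSubmodule_le_ker {R A M : Type*} [CommSemiring R] [CommSemiring A]
    [Algebra R A] [AddCommMonoid M] [Module R M] (L : A →ₗ[R] M) {u v : A}
    (h : ∀ m n : ℕ, L (u ^ m * v ^ n) = 0) :
    Subalgebra.toSubmodule (Algebra.adjoin R {u, v}) ≤ LinearMap.ker L := by
  rw [Algebra.adjoin_eq_span, Submodule.span_le]
  rintro _ hx
  obtain ⟨m, n, rfl⟩ := (Submonoid.mem_closure_pair u v _).1 hx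
  exact h m n

theorem ContinuousMap.separatesPoints_adjoin_fst_snd_restrict (s : Set (ℂ × ℂ)) :
    (StarAlgebra.adjoin ℂ
      {ContinuousMap.fst.restrict s, ContinuousMap.snd.restrict s}).SeparatesPoints := by
  intro x y hxy
  by_cases h1 : x.1.1 = y.1.1
  · refine ⟨_, ⟨ContinuousMap.snd.restrict s, StarAlgebra.subset_adjoin ℂ _ (by simp), rfl⟩, ?_⟩
    exact fun h2 => hxy (Subtype.ext (Prod.ext h1 h2))
  · exact ⟨_, ⟨ContinuousMap.fst.restrict s, StarAlgebra.subset_adjoin ℂ _ (by simp), rfl⟩, h1⟩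

theorem Complex.conj_mul_eq_one_iff {α z : ℂ} (hα : ‖α‖ = 1) : conj α * z = 1 ↔ z = α := by
  constructor
  · intro h
    calc z = α * conj α * z := by rw [mul_conj', hα]; simp
      _ = α := by rw [mul_assoc, h, mul_one]
  · rintro rfl
    rw [conj_mul', hα]; simp

theorem Complex.conj_eq_conj_mul_of_mul_eq {a b α : ℂ} (hb : ‖b‖ = 1) (h : a * b = α) :
    conj a = conj α * b := by
  rw [← h, map_mul, mul_assoc, conj_mul', hb]; simp

theorem torus2_eq_sphere_prod : torus2 = Metric.sphere (0 : ℂ) 1 ×ˢ Metric.sphere (0 : ℂ) 1 := by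
  ext z; simp [torus2]

def torusAntidiagonal (α : ℂ) : Set (ℂ × ℂ) := {z | z.1 * z.2 = α} ∩ torus2

theorem isCompact_torusAntidiagonal (α : ℂ) : IsCompact (torusAntidiagonal α) := by
  rw [torusAntidiagonal, torus2_eq_sphere_prod]
  exact ((isCompact_sphere 0 1).prod (isCompact_sphere 0 1)).inter_left
    (isClosed_eq (by fun_prop) continuous_const)

theorem measurableSet_torusAntidiagonal (α : ℂ) : MeasurableSet (torusAntidiagonal α) :=
  (isCompact_torusAntidiagonal α).isClosed.measurableSet

section TorusMeasure

variable {ρ : Measure (ℂ × ℂ)} {f : ℂ × ℂ → ℂ}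

theorem ae_mem_torus2 (hρ : ρ torus2ᶜ = 0) : ∀ᵐ ζ ∂ρ, ‖ζ.1‖ = 1 ∧ ‖ζ.2‖ = 1 :=
  mem_ae_iff.2 hρ

theorem integrable_monomial_mul (hρ : ρ torus2ᶜ = 0) (hf : Integrable f ρ) (a b : ℕ) :
    Integrable (fun ζ : ℂ × ℂ => ζ.1 ^ a * ζ.2 ^ b * f ζ) ρ :=
  hf.bdd_mul (c := 1) (by fun_prop) <|
    (ae_mem_torus2 hρ).mono fun ζ hζ => by simp [hζ.1, hζ.2]

theorem integral_peak_pow_mul_eq_zero (hρ : ρ torus2ᶜ = 0) (hf : Integrable f ρ)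
    (hmom : ∀ k₁ k₂ : ℕ, ∫ ζ, ζ.1 ^ k₁ * ζ.2 ^ k₂ * f ζ ∂ρ = 0) (c : ℂ) (n a b : ℕ) :
    ∫ ζ, ((1 + c * (ζ.1 * ζ.2)) / 2) ^ n * (ζ.1 ^ a * ζ.2 ^ b * f ζ) ∂ρ = 0 := by
  have hexpand : ∀ ζ : ℂ × ℂ, ((1 + c * (ζ.1 * ζ.2)) / 2) ^ n * (ζ.1 ^ a * ζ.2 ^ b * f ζ) =
      ∑ j ∈ Finset.range (n + 1),
        (n.choose j * c ^ j / 2 ^ n) * (ζ.1 ^ (a + j) * ζ.2 ^ (b + j) * f ζ) := by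
    intro ζ
    rw [add_comm, div_pow, add_pow, Finset.sum_div, Finset.sum_mul]
    refine Finset.sum_congr rfl fun j _ => ?_
    ring
  simp_rw [hexpand]
  rw [integral_finsetSum _ fun j _ => (integrable_monomial_mul hρ hf _ _).const_mul _]
  simp [integral_const_mul, hmom]

theorem setIntegral_torusAntidiagonal_monomial_mul_eq_zero {α : ℂ} (hα : ‖α‖ = 1)
    (hρ : ρ torus2ᶜ = 0) (hf : Integrable f ρ)
    (hmom : ∀ k₁ k₂ : ℕ, ∫ ζ, ζ.1 ^ k₁ * ζ.2 ^ k₂ * f ζ ∂ρ = 0) (a b : ℕ) :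
    ∫ ζ in torusAntidiagonal α, ζ.1 ^ a * ζ.2 ^ b * f ζ ∂ρ = 0 := by
  set φ : ℂ × ℂ → ℂ := fun ζ => (1 + conj α * (ζ.1 * ζ.2)) / 2
  have hpeak : ∀ᵐ ζ ∂ρ, φ ζ = 1 ∨ ‖φ ζ‖ < 1 :=
    (ae_mem_torus2 hρ).mono fun ζ hζ =>
      Complex.one_add_div_two_eq_one_or_norm_lt_one (by simp [hα, hζ.1, hζ.2])
  have hlevel : φ ⁻¹' {1} =ᵐ[ρ] torusAntidiagonal α := by
    have : φ ⁻¹' {1} = {z | z.1 * z.2 = α} := by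
      ext z
      rw [mem_preimage, mem_singleton_iff, div_eq_one_iff_eq two_ne_zero, mem_ofPred_eq,
        ← Complex.conj_mul_eq_one_iff hα]
      constructor <;> intro h <;> linear_combination h
    rw [this]
    exact (inter_ae_eq_left_of_ae_eq_univ (ae_eq_univ.2 hρ)).symm
  have hlim := tendsto_integral_pow_mul (by fun_prop) hpeak (integrable_monomial_mul hρ hf a b)
  simp only [φ, integral_peak_pow_mul_eq_zero hρ hf hmom, Measure.restrict_congr_set hlevel,
    tendsto_const_nhds_iff] at hlim
  exact hlim.symm

theorem ae_eq_zero_on_torusAntidiagonal {α : ℂ} (hf : Integrable f ρ)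
    (hmom : ∀ a b : ℕ, ∫ ζ in torusAntidiagonal α, ζ.1 ^ a * ζ.2 ^ b * f ζ ∂ρ = 0) :
    (fun z : torusAntidiagonal α => f z) =ᵐ[ρ.comap Subtype.val] 0 := by
  set K := torusAntidiagonal α
  have hK : MeasurableSet K := measurableSet_torusAntidiagonal α
  have : CompactSpace K := isCompact_iff_compactSpace.1 (isCompact_torusAntidiagonal α)
  set u : C(K, ℂ) := ContinuousMap.fst.restrict K
  set v : C(K, ℂ) := ContinuousMap.snd.restrict K
  have hfK : Integrable (fun z : K => f z) (ρ.comap Subtype.val) :=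
    (integrableOn_iff_comap_subtypeVal hK).1 hf.integrableOn
  have hstar : star {u, v} ⊆ (Algebra.adjoin ℂ {u, v} : Set C(K, ℂ)) := by
    refine Algebra.star_pair_subset_adjoin (c := conj α) (d := conj α) ?_ ?_
    · ext ⟨z, hprod, -, h2⟩
      exact Complex.conj_eq_conj_mul_of_mul_eq h2 hprod
    · ext ⟨z, hprod, h1, -⟩
      exact Complex.conj_eq_conj_mul_of_mul_eq h1 ((mul_comm _ _).trans hprod)
  refine ae_eq_zero_of_integral_mul_eq_zero_of_separatesPoints
    (ContinuousMap.separatesPoints_adjoin_fst_snd_restrict K) hfK fun φ hφ => ?_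
  have hker := Algebra.adjoin_pair_toSubmodule_le_ker (integralMulCLM hfK : C(K, ℂ) →ₗ[ℂ] ℂ)
    (u := u) (v := v) (fun m n => ?_) (StarAlgebra.adjoin_toSubalgebra_le_of_star_subset hstar hφ)
  · simpa using hker
  · simpa [u, v, integral_subtype_comap hK (fun ζ => ζ.1 ^ m * ζ.2 ^ n * f ζ)] using hmom m n

end TorusMeasure

theorem antidiagonal_is_null_for_annihilators_general
    (α : ℂ) (hα : ‖α‖ = 1)
    -- μ = f dρ is a complex Borel measure on T² annihilating A(D²)
    (ρ : Measure (ℂ × ℂ)) (hρcar : ρ torus2ᶜ = 0)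
    (f : ℂ × ℂ → ℂ) (hf : Integrable f ρ)
    (hmom : ∀ k₁ k₂ : ℕ, ∫ ζ, ζ.1 ^ k₁ * ζ.2 ^ k₂ * f ζ ∂ρ = 0) :
    -- the total variation of the anti-diagonal line is zero
    ∫⁻ ζ in {z : ℂ × ℂ | z.1 * z.2 = α} ∩ torus2, ‖f ζ‖₊ ∂ρ = 0 := by
  have hvanish : (fun z : torusAntidiagonal α => f z) =ᵐ[ρ.comap Subtype.val] 0 :=
    ae_eq_zero_on_torusAntidiagonal hf
      (setIntegral_torusAntidiagonal_monomial_mul_eq_zero hα hρcar hf hmom)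
  rw [← torusAntidiagonal, ← lintegral_subtype_comap (measurableSet_torusAntidiagonal α)]
  exact (lintegral_congr_ae (hvanish.mono fun z hz => by simp [hz])).trans lintegral_zero

theorem antidiagonal_is_null_for_annihilators
    (α : ℂ) (hα : ‖α‖ = 1)
    -- μ = f dρ is a complex Borel measure on T² annihilating A(D²)
    (ρ : Measure (ℂ × ℂ)) (hρfin : IsFiniteMeasure ρ) (hρcar : ρ torus2ᶜ = 0)
    (f : ℂ × ℂ → ℂ) (hf : Integrable f ρ)
    (hmom : ∀ k₁ k₂ : ℕ, ∫ ζ, ζ.1 ^ k₁ * ζ.2 ^ k₂ * f ζ ∂ρ = 0) :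
    -- the total variation of the anti-diagonal line is zero
    ∫⁻ ζ in {z : ℂ × ℂ | z.1 * z.2 = α} ∩ torus2, ‖f ζ‖₊ ∂ρ = 0 :=
  antidiagonal_is_null_for_annihilators_general α hα ρ hρcar f hf hmom
end
end
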